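/- arXiv:2110.10737 — 2 statements merged into one kernel-verified Lean document; each statement's English description precedes it below -/
import Mathlib

section
/- Second-order Gamma Stein identity: if X ~ Gamma(m, 1) with integer m ≥ 1 and g : (0,∞) → ℝ is twice continuously differentiable with all occurring expectations finite and suitable boundary decay, then E[X² g''(X)] = Cov(g(X), (X − m − 1)²). -/
open MeasureTheory ProbabilityTheory

noncomputable def cov {Ω : Type*} [MeasurableSpace Ω] (P : Measure Ω) (V W : Ω → ℝ) : ℝ :=
  ∫ ω, (V ω - ∫ x, V x ∂P) * (W ω - ∫ x, W x ∂P) ∂P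
open Filter

/-!
Write `w(x) = x ^ (a - 1) * exp (-x)` for the unnormalised `Gamma(a, 1)` density, so that
`(x ^ a * exp (-x))' = (a - x) * w(x)`. Integrating the derivative of `x ^ a * exp (-x) * f x` over
`(0, ∞)` gives the first-order Stein identity `∫ (x f' - (x - a) f) w = 0` as soon as the boundary
terms vanish. For `f = x g' + (x - a - 1) g` the terms in `g'` cancel and
`x f' - (x - a) f = x² g'' - ((x - a - 1)² - (a + 1)) g`, so
`E[X² g''(X)] = E[(X - a - 1)² g(X)] - (a + 1) E[g(X)]`; since `E[(X - a - 1)²] = a + 1`, the right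
hand side is the covariance of `g(X)` and `(X - a - 1)²`.
-/

open Real Set Topology
open scoped ENNReal

theorem integral_Ioi_of_hasDerivAt_of_tendsto_nhdsGT {E : Type*} [NormedAddCommGroup E]
    [NormedSpace ℝ E] [CompleteSpace E] {G G' : ℝ → E} {a : ℝ} {u v : E}
    (hderiv : ∀ x ∈ Ioi a, HasDerivAt G (G' x) x) (hint : IntegrableOn G' (Ioi a))
    (hleft : Tendsto G (𝓝[>] a) (𝓝 u)) (hright : Tendsto G atTop (𝓝 v)) :
    ∫ x in Ioi a, G' x = v - u := by
  classical
  have hcont : ContinuousWithinAt (Function.update G a u) (Ici a) a := by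
    rw [← continuousWithinAt_Ioi_iff_Ici, continuousWithinAt_update_same]
    simpa using hleft
  have hderiv' (x : ℝ) (hx : x ∈ Ioi a) : HasDerivAt (Function.update G a u) (G' x) x :=
    (hderiv x hx).congr_of_eventuallyEq <|
      (eventually_ne_nhds (ne_of_gt hx)).mono fun y hy => Function.update_of_ne hy _ _
  have hright' : Tendsto (Function.update G a u) atTop (𝓝 v) :=
    hright.congr' <| (eventually_ne_atTop a).mono fun y hy => (Function.update_of_ne hy _ _).symm
  simpa using integral_Ioi_of_hasDerivAt_of_tendsto hcont hderiv' hint hright'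

theorem aestronglyMeasurable_restrict_of_hasDerivAt {f f' : ℝ → ℝ} {s : Set ℝ}
    (hs : MeasurableSet s) (hf : ∀ x ∈ s, HasDerivAt f (f' x) x) :
    AEStronglyMeasurable f' (volume.restrict s) :=
  (measurable_deriv f).aestronglyMeasurable.congr <|
    (ae_restrict_mem hs).mono fun x hx => (hf x hx).deriv

theorem cov_eq_integral_mul_sub_mul {Ω : Type*} [MeasurableSpace Ω] {P : Measure Ω}
    [IsProbabilityMeasure P] {V W : Ω → ℝ} (hV : Integrable V P) (hW : Integrable W P)
    (hVW : Integrable (fun ω => V ω * W ω) P) :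
    cov P V W = ∫ ω, V ω * W ω ∂P - (∫ ω, V ω ∂P) * ∫ ω, W ω ∂P := by
  unfold cov
  set EV := ∫ ω, V ω ∂P
  set EW := ∫ ω, W ω ∂P
  have hexpand : ∀ ω, (V ω - EV) * (W ω - EW) = (V ω * W ω - EV * W ω) - (EW * V ω - EV * EW) :=
    fun ω => by ring
  simp only [hexpand]
  rw [integral_sub (hVW.sub' (hW.const_mul _)) ((hV.const_mul _).sub' (integrable_const _)),
    integral_sub hVW (hW.const_mul _), integral_sub (hV.const_mul _) (integrable_const _),
    integral_const_mul, integral_const_mul, integral_const, probReal_univ, one_smul]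
  ring

namespace ProbabilityTheory

theorem HasLaw.integrable_fun_comp_iff {Ω 𝓧 E : Type*} {mΩ : MeasurableSpace Ω}
    {m𝓧 : MeasurableSpace 𝓧} [NormedAddCommGroup E] {P : Measure Ω} {μ : Measure 𝓧}
    {X : Ω → 𝓧} (hX : HasLaw X μ P) {f : 𝓧 → E} (hf : AEStronglyMeasurable f μ) :
    Integrable (fun ω => f (X ω)) P ↔ Integrable f μ := by
  rw [← hX.map_eq] at hf ⊢
  exact (integrable_map_measure hf hX.aemeasurable).symm

theorem HasLaw.integral_fun_comp {Ω 𝓧 E : Type*} {mΩ : MeasurableSpace Ω}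
    {m𝓧 : MeasurableSpace 𝓧} [NormedAddCommGroup E] [NormedSpace ℝ E] {P : Measure Ω}
    {μ : Measure 𝓧} {X : Ω → 𝓧} (hX : HasLaw X μ P) {f : 𝓧 → E}
    (hf : AEStronglyMeasurable f μ) :
    ∫ ω, f (X ω) ∂P = ∫ x, f x ∂μ :=
  hX.integral_comp hf

end ProbabilityTheory

section GammaStein

variable {a : ℝ}

theorem hasDerivAt_rpow_mul_exp_neg {x : ℝ} (hx : 0 < x) :
    HasDerivAt (fun y => y ^ a * exp (-y)) ((a - x) * (x ^ (a - 1) * exp (-x))) x := by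
  refine ((hasDerivAt_rpow_const (Or.inl hx.ne')).mul (hasDerivAt_neg x).exp).congr_deriv ?_
  rw [rpow_sub_one hx.ne']
  field_simp
  ring

theorem integral_Ioi_gammaStein_eq_zero {f f' : ℝ → ℝ}
    (hf : ∀ x ∈ Ioi 0, HasDerivAt f (f' x) x)
    (hint : IntegrableOn (fun x => (x * f' x - (x - a) * f x) * (x ^ (a - 1) * exp (-x))) (Ioi 0))
    (hzero : Tendsto (fun x => x ^ a * exp (-x) * f x) (𝓝[>] 0) (𝓝 0))
    (htop : Tendsto (fun x => x ^ a * exp (-x) * f x) atTop (𝓝 0)) :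
    ∫ x in Ioi 0, (x * f' x - (x - a) * f x) * (x ^ (a - 1) * exp (-x)) = 0 := by
  have hderiv (x : ℝ) (hx : 0 < x) : HasDerivAt (fun y => y ^ a * exp (-y) * f y)
      ((x * f' x - (x - a) * f x) * (x ^ (a - 1) * exp (-x))) x := by
    refine ((hasDerivAt_rpow_mul_exp_neg hx).mul (hf x hx)).congr_deriv ?_
    rw [rpow_sub_one hx.ne']
    field_simp
    ring
  simpa using integral_Ioi_of_hasDerivAt_of_tendsto_nhdsGT hderiv hint hzero htop

theorem integral_Ioi_gammaStein_second_order {g g' g'' : ℝ → ℝ}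
    (hg : ∀ x ∈ Ioi 0, HasDerivAt g (g' x) x) (hg' : ∀ x ∈ Ioi 0, HasDerivAt g' (g'' x) x)
    (hint₁ : IntegrableOn (fun x => x ^ 2 * g'' x * (x ^ (a - 1) * exp (-x))) (Ioi 0))
    (hint₂ : IntegrableOn (fun x => (x - a - 1) ^ 2 * g x * (x ^ (a - 1) * exp (-x))) (Ioi 0))
    (hint₃ : IntegrableOn (fun x => g x * (x ^ (a - 1) * exp (-x))) (Ioi 0))
    (hzero : Tendsto (fun x => x ^ a * exp (-x) * (x * g' x)) (𝓝[>] 0) (𝓝 0))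
    (htop : Tendsto (fun x => x ^ a * exp (-x) * (x * g' x)) atTop (𝓝 0))
    (hzero' : Tendsto (fun x => x ^ a * exp (-x) * ((x - a - 1) * g x)) (𝓝[>] 0) (𝓝 0))
    (htop' : Tendsto (fun x => x ^ a * exp (-x) * ((x - a - 1) * g x)) atTop (𝓝 0)) :
    ∫ x in Ioi 0, x ^ 2 * g'' x * (x ^ (a - 1) * exp (-x)) =
      (∫ x in Ioi 0, (x - a - 1) ^ 2 * g x * (x ^ (a - 1) * exp (-x))) -
        (a + 1) * ∫ x in Ioi 0, g x * (x ^ (a - 1) * exp (-x)) := by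
  -- the first-order identity for `f = x g' + (x - a - 1) g`, whose `g'`-terms cancel
  have hf (x : ℝ) (hx : x ∈ Ioi 0) : HasDerivAt (fun y => y * g' y + (y - a - 1) * g y)
      (g' x + x * g'' x + (g x + (x - a - 1) * g' x)) x := by
    refine (((hasDerivAt_id x).mul (hg' x hx)).add
      ((((hasDerivAt_id x).sub_const a).sub_const 1).mul (hg x hx))).congr_deriv ?_
    simp only [id, one_mul]
  have hcancel (x : ℝ) :
      (x * (g' x + x * g'' x + (g x + (x - a - 1) * g' x)) -
        (x - a) * (x * g' x + (x - a - 1) * g x)) * (x ^ (a - 1) * exp (-x)) =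
      x ^ 2 * g'' x * (x ^ (a - 1) * exp (-x)) -
        (x - a - 1) ^ 2 * g x * (x ^ (a - 1) * exp (-x)) +
        (a + 1) * (g x * (x ^ (a - 1) * exp (-x))) := by ring
  have hint : IntegrableOn (fun x => x ^ 2 * g'' x * (x ^ (a - 1) * exp (-x)) -
      (x - a - 1) ^ 2 * g x * (x ^ (a - 1) * exp (-x)) +
      (a + 1) * (g x * (x ^ (a - 1) * exp (-x)))) (Ioi 0) :=
    (hint₁.sub hint₂).add (hint₃.const_mul _)
  have h := integral_Ioi_gammaStein_eq_zero (a := a) hf (by simpa only [hcancel] using hint)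
    (by simpa only [mul_add, add_zero] using hzero.add hzero')
    (by simpa only [mul_add, add_zero] using htop.add htop')
  simp only [hcancel] at h
  rw [integral_add (hint₁.sub' hint₂) (hint₃.const_mul _), integral_sub hint₁ hint₂,
    integral_const_mul] at h
  linarith

theorem gammaMeasure_one_eq_withDensity :
    gammaMeasure a 1 = (volume.restrict (Ioi 0)).withDensity
      fun x => ((x ^ (a - 1) * exp (-x) / Gamma a).toNNReal : ℝ≥0∞) := by
  rw [Measure.restrict_congr_set Ioi_ae_eq_Ici, ← withDensity_indicator measurableSet_Ici,
    gammaMeasure]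
  congr 1
  funext x
  by_cases hx : x ∈ Ici 0
  · rw [indicator_of_mem hx, gammaPDF_of_nonneg hx, one_rpow, one_mul]
    show ENNReal.ofReal _ = ENNReal.ofReal _
    congr 1
    ring
  · rw [indicator_of_notMem hx, gammaPDF_of_neg (by simpa using hx)]

theorem gammaMeasure_one_absolutelyContinuous : gammaMeasure a 1 ≪ volume.restrict (Ioi 0) :=
  gammaMeasure_one_eq_withDensity ▸ withDensity_absolutelyContinuous _ _

theorem integral_gammaMeasure_one (ha : 0 < a) (f : ℝ → ℝ) :
    ∫ x, f x ∂gammaMeasure a 1 = (∫ x in Ioi 0, f x * (x ^ (a - 1) * exp (-x))) / Gamma a := by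
  rw [gammaMeasure_one_eq_withDensity, integral_withDensity_eq_integral_smul (by fun_prop),
    ← integral_div]
  refine setIntegral_congr_fun measurableSet_Ioi fun x (hx : 0 < x) => ?_
  have hΓ := Gamma_pos_of_pos ha
  rw [NNReal.smul_def, smul_eq_mul, Real.coe_toNNReal _ (by positivity)]
  ring

theorem integrable_gammaMeasure_one_iff (ha : 0 < a) {f : ℝ → ℝ} :
    Integrable f (gammaMeasure a 1) ↔
      IntegrableOn (fun x => f x * (x ^ (a - 1) * exp (-x))) (Ioi 0) := by
  have hΓ := Gamma_pos_of_pos ha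
  rw [gammaMeasure_one_eq_withDensity, integrable_withDensity_iff_integrable_smul (by fun_prop),
    IntegrableOn, ← integrable_const_mul_iff (inv_pos.2 hΓ).ne'.isUnit
      (fun x => f x * (x ^ (a - 1) * exp (-x)))]
  refine integrable_congr ((ae_restrict_mem measurableSet_Ioi).mono fun x (hx : 0 < x) => ?_)
  dsimp only
  rw [NNReal.smul_def, smul_eq_mul, Real.coe_toNNReal _ (by positivity)]
  ring

theorem pow_mul_rpow_mul_exp_neg {x : ℝ} (hx : 0 < x) (n : ℕ) :
    x ^ n * (x ^ (a - 1) * exp (-x)) = exp (-x) * x ^ (a + n - 1) := by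
  rw [show a + n - 1 = a - 1 + n by ring, rpow_add hx, rpow_natCast]
  ring

theorem integrable_pow_gammaMeasure_one (ha : 0 < a) (n : ℕ) :
    Integrable (fun x => x ^ n) (gammaMeasure a 1) :=
  (integrable_gammaMeasure_one_iff ha).2 <| (GammaIntegral_convergent (by positivity)).congr_fun
    (fun x hx => (pow_mul_rpow_mul_exp_neg hx n).symm) measurableSet_Ioi

theorem integral_pow_gammaMeasure_one (ha : 0 < a) (n : ℕ) :
    ∫ x, x ^ n ∂gammaMeasure a 1 = Gamma (a + n) / Gamma a := by
  rw [integral_gammaMeasure_one ha, setIntegral_congr_fun measurableSet_Ioi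
    fun x hx => pow_mul_rpow_mul_exp_neg hx n, ← Gamma_eq_integral (by positivity)]

theorem integrable_sub_sq_gammaMeasure_one (ha : 0 < a) :
    Integrable (fun x => (x - a - 1) ^ 2) (gammaMeasure a 1) := by
  have := isProbabilityMeasure_gammaMeasure ha one_pos
  have hexpand (x : ℝ) : (x - a - 1) ^ 2 = x ^ 2 - 2 * (a + 1) * x ^ 1 + (a + 1) ^ 2 := by ring
  simp only [hexpand]
  exact ((integrable_pow_gammaMeasure_one ha 2).sub
    ((integrable_pow_gammaMeasure_one ha 1).const_mul _)).add (integrable_const _)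

theorem integral_sub_sq_gammaMeasure_one (ha : 0 < a) :
    ∫ x, (x - a - 1) ^ 2 ∂gammaMeasure a 1 = a + 1 := by
  have := isProbabilityMeasure_gammaMeasure ha one_pos
  have hexpand (x : ℝ) : (x - a - 1) ^ 2 = x ^ 2 - 2 * (a + 1) * x ^ 1 + (a + 1) ^ 2 := by ring
  simp only [hexpand]
  rw [integral_add ((integrable_pow_gammaMeasure_one ha 2).sub'
      ((integrable_pow_gammaMeasure_one ha 1).const_mul _)) (integrable_const _),
    integral_sub (integrable_pow_gammaMeasure_one ha 2)
      ((integrable_pow_gammaMeasure_one ha 1).const_mul _),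
    integral_const_mul, integral_pow_gammaMeasure_one ha 2, integral_pow_gammaMeasure_one ha 1,
    integral_const, probReal_univ, one_smul]
  have hΓ := (Gamma_pos_of_pos ha).ne'
  rw [show a + ((2 : ℕ) : ℝ) = a + 1 + 1 by push_cast; ring, Gamma_add_one (by positivity),
    Nat.cast_one, Gamma_add_one ha.ne']
  field_simp
  ring

theorem integral_gammaMeasure_one_stein_second_order (ha : 0 < a) {g g' g'' : ℝ → ℝ}
    (hg : ∀ x ∈ Ioi 0, HasDerivAt g (g' x) x) (hg' : ∀ x ∈ Ioi 0, HasDerivAt g' (g'' x) x)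
    (hint₁ : Integrable (fun x => x ^ 2 * g'' x) (gammaMeasure a 1))
    (hint₂ : Integrable (fun x => (x - a - 1) ^ 2 * g x) (gammaMeasure a 1))
    (hint₃ : Integrable g (gammaMeasure a 1))
    (hzero : Tendsto (fun x => x ^ a * exp (-x) * (x * g' x)) (𝓝[>] 0) (𝓝 0))
    (htop : Tendsto (fun x => x ^ a * exp (-x) * (x * g' x)) atTop (𝓝 0))
    (hzero' : Tendsto (fun x => x ^ a * exp (-x) * ((x - a - 1) * g x)) (𝓝[>] 0) (𝓝 0))
    (htop' : Tendsto (fun x => x ^ a * exp (-x) * ((x - a - 1) * g x)) atTop (𝓝 0)) :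
    ∫ x, x ^ 2 * g'' x ∂gammaMeasure a 1 =
      ∫ x, (x - a - 1) ^ 2 * g x ∂gammaMeasure a 1 - (a + 1) * ∫ x, g x ∂gammaMeasure a 1 := by
  rw [integral_gammaMeasure_one ha, integral_gammaMeasure_one ha, integral_gammaMeasure_one ha,
    integral_Ioi_gammaStein_second_order hg hg' ((integrable_gammaMeasure_one_iff ha).1 hint₁)
      ((integrable_gammaMeasure_one_iff ha).1 hint₂) ((integrable_gammaMeasure_one_iff ha).1 hint₃)
      hzero htop hzero' htop']
  ring

end GammaStein



theorem gamma_second_order_stein_identity_general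
    {Ω : Type*} [MeasurableSpace Ω] (P : Measure Ω) [IsProbabilityMeasure P]
    (m : ℕ) (hm : 1 ≤ m) (X : Ω → ℝ) (hX : P.map X = gammaMeasure m 1)
    (g g' g'' : ℝ → ℝ)
    (hg : ∀ x ∈ Set.Ioi (0 : ℝ), HasDerivAt g (g' x) x)
    (hg' : ∀ x ∈ Set.Ioi (0 : ℝ), HasDerivAt g' (g'' x) x)
    (hint1 : Integrable (fun ω => (X ω) ^ 2 * g'' (X ω)) P)
    (hint3 : Integrable (fun ω => g (X ω)) P)
    (hint4 : Integrable (fun ω => (X ω - m - 1) ^ 2 * g (X ω)) P)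
    (hb0 : Tendsto (fun x : ℝ => x ^ (m : ℕ) * Real.exp (-x) * (x * g' x))
      (nhdsWithin 0 (Set.Ioi 0)) (nhds 0))
    (hbtop : Tendsto (fun x : ℝ => x ^ (m : ℕ) * Real.exp (-x) * (x * g' x))
      atTop (nhds 0))
    (hb0' : Tendsto (fun x : ℝ => x ^ (m : ℕ) * Real.exp (-x) * ((x - m - 1) * g x))
      (nhdsWithin 0 (Set.Ioi 0)) (nhds 0))
    (hbtop' : Tendsto (fun x : ℝ => x ^ (m : ℕ) * Real.exp (-x) * ((x - m - 1) * g x))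
      atTop (nhds 0)) :
    ∫ ω, (X ω) ^ 2 * g'' (X ω) ∂P
      = cov P (fun ω => g (X ω)) (fun ω => (X ω - m - 1) ^ 2) := by
  have ha : (0 : ℝ) < m := by exact_mod_cast hm
  have := isProbabilityMeasure_gammaMeasure ha one_pos
  have hlaw : HasLaw X (gammaMeasure m 1) P :=
    ⟨.of_map_ne_zero (hX ▸ IsProbabilityMeasure.ne_zero _), hX⟩
  have hmeas_g : AEStronglyMeasurable g (gammaMeasure m 1) :=
    (ContinuousOn.aestronglyMeasurable (fun x hx => (hg x hx).continuousAt.continuousWithinAt)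
      measurableSet_Ioi).mono_ac gammaMeasure_one_absolutelyContinuous
  have hmeas_g'' : AEStronglyMeasurable g'' (gammaMeasure m 1) :=
    (aestronglyMeasurable_restrict_of_hasDerivAt measurableSet_Ioi hg').mono_ac
      gammaMeasure_one_absolutelyContinuous
  have hmeas_sq : AEStronglyMeasurable (fun x : ℝ => (x - m - 1) ^ 2) (gammaMeasure m 1) := by
    fun_prop
  have hmeas₁ : AEStronglyMeasurable (fun x : ℝ => x ^ 2 * g'' x) (gammaMeasure m 1) :=
    (continuous_pow 2).aestronglyMeasurable.mul hmeas_g''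
  have hmeas₂ : AEStronglyMeasurable (fun x : ℝ => (x - m - 1) ^ 2 * g x) (gammaMeasure m 1) :=
    hmeas_sq.mul hmeas_g
  have hstein := integral_gammaMeasure_one_stein_second_order ha hg hg'
    ((hlaw.integrable_fun_comp_iff hmeas₁).1 hint1) ((hlaw.integrable_fun_comp_iff hmeas₂).1 hint4)
    ((hlaw.integrable_fun_comp_iff hmeas_g).1 hint3)
    (by simpa using hb0) (by simpa using hbtop) (by simpa using hb0') (by simpa using hbtop')
  rw [cov_eq_integral_mul_sub_mul hint3
    ((hlaw.integrable_fun_comp_iff hmeas_sq).2 (integrable_sub_sq_gammaMeasure_one ha))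
    (by simpa only [mul_comm] using hint4)]
  simp only [mul_comm (g _)]
  rw [hlaw.integral_fun_comp hmeas₁, hlaw.integral_fun_comp hmeas₂, hlaw.integral_fun_comp hmeas_g,
    hlaw.integral_fun_comp hmeas_sq, integral_sub_sq_gammaMeasure_one ha, hstein]
  ring

theorem gamma_second_order_stein_identity
    {Ω : Type*} [MeasurableSpace Ω] (P : Measure Ω) [IsProbabilityMeasure P]
    (m : ℕ) (hm : 1 ≤ m) (X : Ω → ℝ) (hX : P.map X = gammaMeasure m 1)
    (g g' g'' : ℝ → ℝ)
    (hg : ∀ x ∈ Set.Ioi (0 : ℝ), HasDerivAt g (g' x) x)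
    (hg' : ∀ x ∈ Set.Ioi (0 : ℝ), HasDerivAt g' (g'' x) x)
    (hg'' : ContinuousOn g'' (Set.Ioi 0))
    (hint1 : Integrable (fun ω => (X ω) ^ 2 * g'' (X ω)) P)
    (hint2 : Integrable (fun ω => X ω * g' (X ω)) P)
    (hint3 : Integrable (fun ω => g (X ω)) P)
    (hint4 : Integrable (fun ω => (X ω - m - 1) ^ 2 * g (X ω)) P)
    (hb0 : Tendsto (fun x : ℝ => x ^ (m : ℕ) * Real.exp (-x) * (x * g' x))
      (nhdsWithin 0 (Set.Ioi 0)) (nhds 0))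
    (hbtop : Tendsto (fun x : ℝ => x ^ (m : ℕ) * Real.exp (-x) * (x * g' x))
      atTop (nhds 0))
    (hb0' : Tendsto (fun x : ℝ => x ^ (m : ℕ) * Real.exp (-x) * ((x - m - 1) * g x))
      (nhdsWithin 0 (Set.Ioi 0)) (nhds 0))
    (hbtop' : Tendsto (fun x : ℝ => x ^ (m : ℕ) * Real.exp (-x) * ((x - m - 1) * g x))
      atTop (nhds 0)) :
    ∫ ω, (X ω) ^ 2 * g'' (X ω) ∂P
      = cov P (fun ω => g (X ω)) (fun ω => (X ω - m - 1) ^ 2) :=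
  gamma_second_order_stein_identity_general P m hm X hX g g' g'' hg hg' hint1 hint3 hint4 hb0 hbtop
    hb0' hbtop'
end

section
/- Let Z₁, Z₂, … be i.i.d. Exp(1) and ζ_{j,m} = Z_j + ⋯ + Z_{j+m-1}. For the kernel g(x) = x² − 2mx (arising from h(x,y) = (x−y)²), one has Cov(g(ζ_{1,m}), ζ_{1,m}) = 2m, and Σ_{j=1}^{2m} Cov(g(ζ_{m,m}), g(ζ_{j,m})) − [Cov(g(ζ_{1,m}), ζ_{1,m})]² = 2m(m+1)(2m+1)/3. -/
/-!
Split the two windows into the block of summands they share and the blocks they do not.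
Block sums over disjoint index sets are independent, and a sum of `k` independent standard
exponentials has the rising factorials `k (k + 1) ⋯ (k + p - 1)` as raw moments (induct on the
block: binomial theorem plus Vandermonde's identity for rising factorials). Expanding the
covariances bilinearly into such moments, `cov (g ζ_s) (g ζ_t) = 2k² + 6k` depends only on the
number `k` of shared summands, and `cov (g ζ) ζ = 2m` is the third central moment of Gamma(m).
The overlaps of `ζ_m` with `ζ_1, …, ζ_{2m}` are `1, …, m, …, 1, 0`, and summing gives the constant.
-/

open MeasureTheory ProbabilityTheory

open Finset
open scoped Nat

lemma expMeasure_one_eq_withDensity :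
    expMeasure 1 = volume.withDensity (fun x => ENNReal.ofReal (gammaPDFReal 1 1 x)) := rfl

lemma gammaPDFReal_one_one_mul_pow (n : ℕ) :
    (fun x => gammaPDFReal 1 1 x * x ^ n) =
      (Set.Ici 0).indicator (fun x => Real.exp (-x) * x ^ n) := by
  ext x
  by_cases hx : 0 ≤ x <;> simp [gammaPDFReal, hx]

lemma integrable_pow_expMeasure_one (n : ℕ) : Integrable (fun x : ℝ => x ^ n) (expMeasure 1) := by
  rw [expMeasure_one_eq_withDensity, integrable_withDensity_iff (by fun_prop) (by simp)]
  simp_rw [ENNReal.toReal_ofReal (gammaPDFReal_nonneg zero_lt_one zero_lt_one _),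
    mul_comm _ (gammaPDFReal 1 1 _), gammaPDFReal_one_one_mul_pow]
  rw [integrable_indicator_iff measurableSet_Ici, integrableOn_Ici_iff_integrableOn_Ioi]
  simpa [Real.rpow_natCast] using Real.GammaIntegral_convergent (s := n + 1) (by positivity)

lemma integral_pow_expMeasure_one (n : ℕ) : ∫ x, x ^ n ∂expMeasure 1 = n ! := by
  rw [expMeasure_one_eq_withDensity,
    integral_withDensity_eq_integral_toReal_smul (by fun_prop) (by simp)]
  simp_rw [ENNReal.toReal_ofReal (gammaPDFReal_nonneg zero_lt_one zero_lt_one _), smul_eq_mul,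
    gammaPDFReal_one_one_mul_pow]
  rw [integral_indicator measurableSet_Ici, integral_Ici_eq_integral_Ioi,
    ← Real.Gamma_nat_eq_factorial, Real.Gamma_eq_integral (by positivity)]
  simp [Real.rpow_natCast]

lemma factorial_succ_sub_mul_choose_succ {p i : ℕ} (hi : i ≤ p) :
    (p + 1 - i)! * (p + 1).choose i = (p + 1) * ((p - i)! * p.choose i) := by
  rw [← Nat.choose_symm hi, ← Nat.choose_symm (by omega : i ≤ p + 1),
    ← Nat.descFactorial_eq_factorial_mul_choose, ← Nat.descFactorial_eq_factorial_mul_choose,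
    Nat.sub_add_comm hi, Nat.succ_descFactorial_succ]

open Polynomial in
theorem ascPochhammer_eval_add_one {R : Type*} [CommSemiring R] (x : R) (p : ℕ) :
    (ascPochhammer R p).eval (x + 1) =
      ∑ i ∈ range (p + 1), (ascPochhammer R i).eval x * (p - i)! * p.choose i := by
  induction p with
  | zero => simp
  | succ p ih =>
    have hrec := congr_arg (eval x) (ascPochhammer_succ_comp_X_add_one (S := R) p)
    simp only [nsmul_eq_mul, eval_add, eval_mul, eval_natCast, eval_comp, eval_X,
      eval_one] at hrec
    rw [hrec, ih, sum_range_succ _ (p + 1), mul_sum, add_comm]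
    congr 1
    · refine sum_congr rfl fun i hi => ?_
      have hi : i ≤ p := Nat.lt_succ_iff.mp (mem_range.mp hi)
      rw [mul_assoc _ ((p + 1 - i)! : R), ← Nat.cast_mul, factorial_succ_sub_mul_choose_succ hi]
      push_cast
      ring
    · simp

lemma add_pow_mul_add_pow {R : Type*} [CommSemiring R] (u v w : R) (p q : ℕ) :
    (u + v) ^ p * (u + w) ^ q = ∑ i ∈ range (p + 1), ∑ j ∈ range (q + 1),
      u ^ (i + j) * v ^ (p - i) * w ^ (q - j) * (p.choose i * q.choose j) := by
  rw [add_pow, add_pow, sum_mul_sum]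
  refine sum_congr rfl fun i _ => sum_congr rfl fun j _ => ?_
  ring

section Moments

variable {Ω : Type*} [MeasurableSpace Ω] {μ : Measure Ω} {X Y : Ω → ℝ}

lemma integrable_pow_of_map_eq_expMeasure (hX : AEMeasurable X μ)
    (hlaw : μ.map X = expMeasure 1) (n : ℕ) : Integrable (fun ω => X ω ^ n) μ := by
  have h := integrable_pow_expMeasure_one n
  rw [← hlaw] at h
  exact h.comp_aemeasurable hX

lemma integral_pow_of_map_eq_expMeasure (hX : AEMeasurable X μ)
    (hlaw : μ.map X = expMeasure 1) (n : ℕ) : ∫ ω, X ω ^ n ∂μ = n ! := by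
  rw [← integral_pow_expMeasure_one n, ← hlaw, integral_map hX (by fun_prop)]

lemma ProbabilityTheory.IndepFun.integrable_add_pow (hXY : IndepFun X Y μ)
    (hX : ∀ n : ℕ, Integrable (fun ω => X ω ^ n) μ) (hY : ∀ n : ℕ, Integrable (fun ω => Y ω ^ n) μ)
    (p : ℕ) : Integrable (fun ω => (X ω + Y ω) ^ p) μ := by
  simp_rw [add_pow]
  exact integrable_finsetSum _ fun i _ =>
    ((hXY.comp (measurable_id.pow_const i) (measurable_id.pow_const (p - i))).integrable_mul
      (hX i) (hY (p - i))).mul_const _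

lemma ProbabilityTheory.IndepFun.integral_add_pow (hXY : IndepFun X Y μ)
    (hX : ∀ n : ℕ, Integrable (fun ω => X ω ^ n) μ) (hY : ∀ n : ℕ, Integrable (fun ω => Y ω ^ n) μ)
    (p : ℕ) :
    ∫ ω, (X ω + Y ω) ^ p ∂μ =
      ∑ i ∈ range (p + 1), (∫ ω, X ω ^ i ∂μ) * (∫ ω, Y ω ^ (p - i) ∂μ) * p.choose i := by
  have hpow (i j : ℕ) : IndepFun (fun ω => X ω ^ i) (fun ω => Y ω ^ j) μ :=
    hXY.comp (measurable_id.pow_const i) (measurable_id.pow_const j)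
  have hint (i : ℕ) : Integrable (fun ω => X ω ^ i * Y ω ^ (p - i) * p.choose i) μ :=
    ((hpow i (p - i)).integrable_mul (hX i) (hY (p - i))).mul_const _
  simp_rw [add_pow]
  rw [integral_finsetSum _ fun i _ => hint i]
  refine sum_congr rfl fun i _ => ?_
  rw [integral_mul_const, (hpow i (p - i)).integral_fun_mul_eq_mul_integral (hX i).1 (hY _).1]

noncomputable def mixedMoment (μ : Measure Ω) (X Y : Ω → ℝ) (p q : ℕ) : ℝ :=
  ∫ ω, X ω ^ p * Y ω ^ q ∂μ

lemma memLp_two_pow (hX : ∀ n : ℕ, Integrable (fun ω => X ω ^ n) μ) (p : ℕ) :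
    MemLp (fun ω => X ω ^ p) 2 μ :=
  (memLp_two_iff_integrable_sq (hX p).1).2 (by simpa only [← pow_mul] using hX (p * 2))

lemma covariance_pow_pow [IsProbabilityMeasure μ] (hX : ∀ n : ℕ, Integrable (fun ω => X ω ^ n) μ)
    (hY : ∀ n : ℕ, Integrable (fun ω => Y ω ^ n) μ) (p q : ℕ) :
    cov[fun ω => X ω ^ p, fun ω => Y ω ^ q; μ] =
      ∫ ω, X ω ^ p * Y ω ^ q ∂μ - (∫ ω, X ω ^ p ∂μ) * ∫ ω, Y ω ^ q ∂μ :=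
  covariance_eq_sub (memLp_two_pow hX p) (memLp_two_pow hY q)

lemma covariance_sq_sub_mul_sq_sub [IsProbabilityMeasure μ]
    (hX : ∀ n : ℕ, Integrable (fun ω => X ω ^ n) μ)
    (hY : ∀ n : ℕ, Integrable (fun ω => Y ω ^ n) μ) (c d : ℝ) :
    cov[fun ω => X ω ^ 2 - c * X ω, fun ω => Y ω ^ 2 - d * Y ω; μ] =
      mixedMoment μ X Y 2 2 - d * mixedMoment μ X Y 2 1 - c * mixedMoment μ X Y 1 2
        + c * d * mixedMoment μ X Y 1 1
        - (mixedMoment μ X Y 2 0 - c * mixedMoment μ X Y 1 0)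
          * (mixedMoment μ X Y 0 2 - d * mixedMoment μ X Y 0 1) := by
  have hX1 : MemLp X 2 μ := by simpa using memLp_two_pow hX 1
  have hY1 : MemLp Y 2 μ := by simpa using memLp_two_pow hY 1
  have h21 := covariance_pow_pow hX hY 2 1
  have h12 := covariance_pow_pow hX hY 1 2
  have h11 := covariance_pow_pow hX hY 1 1
  simp only [pow_one] at h21 h12 h11
  rw [covariance_fun_sub_fun_sub (memLp_two_pow hX 2) (hX1.const_mul c) (memLp_two_pow hY 2)
    (hY1.const_mul d), covariance_const_mul_left, covariance_const_mul_right,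
    covariance_const_mul_left, covariance_const_mul_right, covariance_pow_pow hX hY, h21, h12, h11]
  simp only [mixedMoment, pow_zero, pow_one, mul_one, one_mul]
  ring

end Moments

def blockSum {Ω : Type*} (Z : ℕ → Ω → ℝ) (A : Finset ℕ) (ω : Ω) : ℝ := ∑ i ∈ A, Z i ω

section BlockSum

variable {Ω : Type*} {Z : ℕ → Ω → ℝ}

@[simp] lemma blockSum_empty : blockSum Z ∅ = 0 := by
  ext; simp [blockSum]

@[simp] lemma blockSum_singleton (i : ℕ) : blockSum Z {i} = Z i := by
  ext; simp [blockSum]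

lemma blockSum_insert {i : ℕ} {A : Finset ℕ} (hi : i ∉ A) :
    blockSum Z (insert i A) = fun ω => blockSum Z A ω + Z i ω := by
  ext; simp [blockSum, sum_insert hi, add_comm]

lemma blockSum_Ico_eq_add {a b c : ℕ} (hab : a ≤ b) (hbc : b ≤ c) :
    blockSum Z (Ico a c) = fun ω => blockSum Z (Ico a b) ω + blockSum Z (Ico b c) ω :=
  funext fun _ => (sum_Ico_consecutive _ hab hbc).symm

variable [MeasurableSpace Ω] {P : Measure Ω} {A B C : Finset ℕ}

lemma measurable_blockSum (hmeas : ∀ i, Measurable (Z i)) (A : Finset ℕ) :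
    Measurable (blockSum Z A) :=
  measurable_sum A fun i _ => hmeas i

lemma indepFun_blockSum_prodMk (hmeas : ∀ i, Measurable (Z i)) (hindep : iIndepFun Z P)
    (hAC : Disjoint A C) (hBC : Disjoint B C) :
    IndepFun (fun ω => (blockSum Z A ω, blockSum Z B ω)) (blockSum Z C) P := by
  classical
  have h := (hindep.indepFun_finset (A ∪ B) C (disjoint_union_left.2 ⟨hAC, hBC⟩) hmeas).comp
    (show Measurable fun x : ↥(A ∪ B) → ℝ =>
      (∑ i : A, x ⟨i, mem_union_left B i.2⟩, ∑ i : B, x ⟨i, mem_union_right A i.2⟩) by fun_prop)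
    (show Measurable fun x : C → ℝ => ∑ i, x i by fun_prop)
  have hsum (s : Finset ℕ) (ω : Ω) : ∑ i : s, Z i ω = blockSum Z s ω := sum_coe_sort s (Z · ω)
  simpa only [Function.comp_def, hsum] using h

lemma indepFun_blockSum (hmeas : ∀ i, Measurable (Z i)) (hindep : iIndepFun Z P)
    (hAB : Disjoint A B) : IndepFun (blockSum Z A) (blockSum Z B) P :=
  (indepFun_blockSum_prodMk hmeas hindep hAB (disjoint_empty_left B)).comp measurable_fst
    measurable_id

lemma indepFun_blockSum_of_notMem (hmeas : ∀ i, Measurable (Z i)) (hindep : iIndepFun Z P)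
    {i : ℕ} (hi : i ∉ A) : IndepFun (blockSum Z A) (Z i) P := by
  simpa using indepFun_blockSum hmeas hindep (disjoint_singleton_right.2 hi)

lemma indepFun_blockSum_pow (hmeas : ∀ i, Measurable (Z i)) (hindep : iIndepFun Z P)
    (hAB : Disjoint A B) (a b : ℕ) :
    IndepFun (fun ω => blockSum Z A ω ^ a) (fun ω => blockSum Z B ω ^ b) P :=
  (indepFun_blockSum hmeas hindep hAB).comp (measurable_id.pow_const a) (measurable_id.pow_const b)

lemma indepFun_blockSum_pow_mul_pow (hmeas : ∀ i, Measurable (Z i)) (hindep : iIndepFun Z P)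
    (hAC : Disjoint A C) (hBC : Disjoint B C) (a b c : ℕ) :
    IndepFun (fun ω => blockSum Z A ω ^ a * blockSum Z B ω ^ b)
      (fun ω => blockSum Z C ω ^ c) P :=
  (indepFun_blockSum_prodMk hmeas hindep hAC hBC).comp
    (show Measurable fun x : ℝ × ℝ => x.1 ^ a * x.2 ^ b by fun_prop) (measurable_id.pow_const c)

variable [IsProbabilityMeasure P]

lemma integrable_blockSum_pow (hmeas : ∀ i, Measurable (Z i)) (hindep : iIndepFun Z P)
    (hdist : ∀ i, P.map (Z i) = expMeasure 1) (A : Finset ℕ) (p : ℕ) :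
    Integrable (fun ω => blockSum Z A ω ^ p) P := by
  classical
  induction A using Finset.induction_on generalizing p with
  | empty => simp
  | insert i A hi ih =>
    rw [blockSum_insert hi]
    exact (indepFun_blockSum_of_notMem hmeas hindep hi).integrable_add_pow ih
      (integrable_pow_of_map_eq_expMeasure (hmeas i).aemeasurable (hdist i)) p

lemma integral_blockSum_pow (hmeas : ∀ i, Measurable (Z i)) (hindep : iIndepFun Z P)
    (hdist : ∀ i, P.map (Z i) = expMeasure 1) (A : Finset ℕ) (p : ℕ) :
    ∫ ω, blockSum Z A ω ^ p ∂P = (ascPochhammer ℝ p).eval (#A : ℝ) := by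
  classical
  induction A using Finset.induction_on generalizing p with
  | empty => cases p <;> simp
  | insert i A hi ih =>
    rw [blockSum_insert hi, (indepFun_blockSum_of_notMem hmeas hindep hi).integral_add_pow
      (integrable_blockSum_pow hmeas hindep hdist A)
      (integrable_pow_of_map_eq_expMeasure (hmeas i).aemeasurable (hdist i)),
      card_insert_of_notMem hi, Nat.cast_succ, ascPochhammer_eval_add_one]
    refine sum_congr rfl fun j _ => ?_
    rw [ih, integral_pow_of_map_eq_expMeasure (hmeas i).aemeasurable (hdist i)]

lemma integrable_blockSum_pow_mul_pow_mul_pow (hmeas : ∀ i, Measurable (Z i))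
    (hindep : iIndepFun Z P) (hdist : ∀ i, P.map (Z i) = expMeasure 1)
    (hAB : Disjoint A B) (hAC : Disjoint A C) (hBC : Disjoint B C) (a b c : ℕ) :
    Integrable (fun ω => blockSum Z A ω ^ a * blockSum Z B ω ^ b * blockSum Z C ω ^ c) P :=
  (indepFun_blockSum_pow_mul_pow hmeas hindep hAC hBC a b c).integrable_mul
    ((indepFun_blockSum_pow hmeas hindep hAB a b).integrable_mul
      (integrable_blockSum_pow hmeas hindep hdist A a)
      (integrable_blockSum_pow hmeas hindep hdist B b))
    (integrable_blockSum_pow hmeas hindep hdist C c)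

lemma integral_blockSum_pow_mul_pow_mul_pow (hmeas : ∀ i, Measurable (Z i))
    (hindep : iIndepFun Z P) (hdist : ∀ i, P.map (Z i) = expMeasure 1)
    (hAB : Disjoint A B) (hAC : Disjoint A C) (hBC : Disjoint B C) (a b c : ℕ) :
    ∫ ω, blockSum Z A ω ^ a * blockSum Z B ω ^ b * blockSum Z C ω ^ c ∂P =
      (ascPochhammer ℝ a).eval (#A : ℝ) * (ascPochhammer ℝ b).eval (#B : ℝ) *
        (ascPochhammer ℝ c).eval (#C : ℝ) := by
  have hm := measurable_blockSum hmeas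
  rw [(indepFun_blockSum_pow_mul_pow hmeas hindep hAC hBC a b c).integral_fun_mul_eq_mul_integral
      (by fun_prop) (by fun_prop),
    (indepFun_blockSum_pow hmeas hindep hAB a b).integral_fun_mul_eq_mul_integral
      (by fun_prop) (by fun_prop)]
  simp only [integral_blockSum_pow hmeas hindep hdist]

lemma integrable_blockSum_add_pow_mul_add_pow (hmeas : ∀ i, Measurable (Z i))
    (hindep : iIndepFun Z P) (hdist : ∀ i, P.map (Z i) = expMeasure 1)
    (hAB : Disjoint A B) (hAC : Disjoint A C) (hBC : Disjoint B C) (p q : ℕ) :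
    Integrable (fun ω => (blockSum Z A ω + blockSum Z B ω) ^ p *
      (blockSum Z A ω + blockSum Z C ω) ^ q) P := by
  simp_rw [add_pow_mul_add_pow]
  exact integrable_finsetSum _ fun i _ => integrable_finsetSum _ fun j _ =>
    (integrable_blockSum_pow_mul_pow_mul_pow hmeas hindep hdist hAB hAC hBC _ _ _).mul_const _

lemma integral_blockSum_add_pow_mul_add_pow (hmeas : ∀ i, Measurable (Z i))
    (hindep : iIndepFun Z P) (hdist : ∀ i, P.map (Z i) = expMeasure 1)
    (hAB : Disjoint A B) (hAC : Disjoint A C) (hBC : Disjoint B C) (p q : ℕ) :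
    ∫ ω, (blockSum Z A ω + blockSum Z B ω) ^ p * (blockSum Z A ω + blockSum Z C ω) ^ q ∂P =
      ∑ i ∈ range (p + 1), ∑ j ∈ range (q + 1),
        (ascPochhammer ℝ (i + j)).eval (#A : ℝ) * (ascPochhammer ℝ (p - i)).eval (#B : ℝ) *
          (ascPochhammer ℝ (q - j)).eval (#C : ℝ) * (p.choose i * q.choose j) := by
  have hint (i j : ℕ) := (integrable_blockSum_pow_mul_pow_mul_pow hmeas hindep hdist hAB hAC hBC
    (i + j) (p - i) (q - j)).mul_const ((p.choose i : ℝ) * q.choose j)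
  simp_rw [add_pow_mul_add_pow]
  rw [integral_finsetSum _ fun i _ => integrable_finsetSum _ fun j _ => hint i j]
  refine sum_congr rfl fun i _ => ?_
  rw [integral_finsetSum _ fun j _ => hint i j]
  refine sum_congr rfl fun j _ => ?_
  rw [integral_mul_const, integral_blockSum_pow_mul_pow_mul_pow hmeas hindep hdist hAB hAC hBC]

lemma covariance_blockSum_sq_sub (hmeas : ∀ i, Measurable (Z i)) (hindep : iIndepFun Z P)
    (hdist : ∀ i, P.map (Z i) = expMeasure 1) (A : Finset ℕ) :
    cov[fun ω => blockSum Z A ω ^ 2 - 2 * #A * blockSum Z A ω, blockSum Z A; P] = 2 * #A := by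
  have hX := integrable_blockSum_pow hmeas hindep hdist A
  have hX1 : MemLp (blockSum Z A) 2 P := by simpa using memLp_two_pow hX 1
  have h21 := covariance_pow_pow hX hX 2 1
  have h11 := covariance_pow_pow hX hX 1 1
  have hmom := integral_blockSum_pow hmeas hindep hdist A
  have hmom1 := hmom 1
  simp only [pow_one, ← sq, ← pow_succ] at h21 h11 hmom1
  rw [covariance_fun_sub_left (memLp_two_pow hX 2) (hX1.const_mul _) hX1,
    covariance_const_mul_left, h21, h11, hmom, hmom, hmom1]
  simp only [ascPochhammer_succ_eval, ascPochhammer_one, Polynomial.eval_X, Nat.cast_one,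
    Nat.cast_ofNat]
  ring

noncomputable def overlapCov (k : ℕ) : ℝ := 2 * k ^ 2 + 6 * k

lemma covariance_blockSum_add_sq_sub (hmeas : ∀ i, Measurable (Z i)) (hindep : iIndepFun Z P)
    (hdist : ∀ i, P.map (Z i) = expMeasure 1)
    (hAB : Disjoint A B) (hAC : Disjoint A C) (hBC : Disjoint B C) :
    cov[fun ω => (blockSum Z A ω + blockSum Z B ω) ^ 2
          - 2 * (#A + #B) * (blockSum Z A ω + blockSum Z B ω),
        fun ω => (blockSum Z A ω + blockSum Z C ω) ^ 2
          - 2 * (#A + #C) * (blockSum Z A ω + blockSum Z C ω); P] =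
      overlapCov #A := by
  have hint := integrable_blockSum_add_pow_mul_add_pow hmeas hindep hdist hAB hAC hBC
  rw [covariance_sq_sub_mul_sq_sub (by simpa using (hint · 0)) (by simpa using hint 0)]
  simp only [mixedMoment, integral_blockSum_add_pow_mul_add_pow hmeas hindep hdist hAB hAC hBC,
    sum_range_succ, sum_range_zero, ascPochhammer_succ_eval, ascPochhammer_zero,
    Polynomial.eval_one, Nat.choose_zero_right, Nat.choose_succ_self_right, Nat.choose_self,
    tsub_self, Nat.reduceAdd, add_zero, zero_add, Nat.cast_one, Nat.cast_ofNat,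
    CharP.cast_eq_zero, overlapCov]
  ring

lemma covariance_window (hmeas : ∀ i, Measurable (Z i)) (hindep : iIndepFun Z P)
    (hdist : ∀ i, P.map (Z i) = expMeasure 1) {m s t : ℕ} (hst : s ≤ t) (hts : t ≤ s + m) :
    cov[fun ω => blockSum Z (Ico s (s + m)) ω ^ 2 - 2 * m * blockSum Z (Ico s (s + m)) ω,
        fun ω => blockSum Z (Ico t (t + m)) ω ^ 2 - 2 * m * blockSum Z (Ico t (t + m)) ω; P] =
      overlapCov (s + m - t) := by
  have hB : (m : ℝ) = #(Ico t (s + m)) + #(Ico s t) := by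
    simp only [Nat.card_Ico]
    exact_mod_cast (by omega : m = s + m - t + (t - s))
  have hC : (m : ℝ) = #(Ico t (s + m)) + #(Ico (s + m) (t + m)) := by
    simp only [Nat.card_Ico]
    exact_mod_cast (by omega : m = s + m - t + (t + m - (s + m)))
  have hcov := covariance_blockSum_add_sq_sub hmeas hindep hdist
    (Ico_disjoint_Ico_consecutive s t (s + m)).symm (Ico_disjoint_Ico_consecutive t (s + m) (t + m))
    ((Ico_disjoint_Ico_consecutive s (s + m) (t + m)).mono_left (Ico_subset_Ico_right hts))
  rw [← hB, ← hC, Nat.card_Ico] at hcov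
  rw [blockSum_Ico_eq_add hst hts, blockSum_Ico_eq_add hts (by omega : s + m ≤ t + m)]
  simpa only [add_comm (blockSum Z (Ico s t) _)] using hcov

end BlockSum

lemma sum_Icc_one_two_mul_min {M : Type*} [AddCommMonoid M] (h : ℕ → M) (m : ℕ) :
    ∑ j ∈ Icc 1 (2 * m), h (min j (2 * m - j)) = ∑ k ∈ range m, (h (k + 1) + h k) := by
  rw [← Ico_add_one_right_eq_Icc, sum_Ico_eq_sum_range, show 2 * m + 1 - 1 = m + m by omega,
    sum_range_add, sum_add_distrib, ← sum_range_reflect h m]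
  congr 1 <;> refine sum_congr rfl fun k hk => congr_arg h ?_ <;> have := mem_range.mp hk <;> omega

lemma sum_range_overlapCov_succ_add (m : ℕ) :
    ∑ k ∈ range m, (overlapCov (k + 1) + overlapCov k) =
      2 * m * (m + 1) * (2 * m + 1) / 3 + (2 * m) ^ 2 := by
  induction m with
  | zero => simp
  | succ m ih =>
    rw [sum_range_succ, ih, overlapCov, overlapCov]
    push_cast
    ring

theorem greenwood_kernel_variance_constants_general
    {Ω : Type*} [MeasurableSpace Ω] (P : Measure Ω) [IsProbabilityMeasure P]
    (Z : ℕ → Ω → ℝ) (hmeas : ∀ i, Measurable (Z i))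
    (hindep : iIndepFun Z P)
    (hdist : ∀ i, P.map (Z i) = expMeasure 1)
    (m : ℕ)
    (ζ : ℕ → Ω → ℝ) (hζ : ∀ j ω, ζ j ω = ∑ i ∈ Finset.range m, Z (j + i) ω)
    (g : ℝ → ℝ) (hg : ∀ x, g x = x ^ 2 - 2 * m * x) :
    cov P (fun ω => g (ζ 1 ω)) (ζ 1) = 2 * m ∧
      (∑ j ∈ Finset.Icc 1 (2 * m), cov P (fun ω => g (ζ m ω)) (fun ω => g (ζ j ω)))
          - (cov P (fun ω => g (ζ 1 ω)) (ζ 1)) ^ 2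
        = 2 * m * (m + 1) * (2 * m + 1) / 3 := by
  have hW (j : ℕ) : ζ j = blockSum Z (Ico j (j + m)) := funext fun ω => by
    rw [hζ, blockSum, sum_Ico_eq_sum_range, Nat.add_sub_cancel_left]
  have hgW (j : ℕ) : (fun ω => g (ζ j ω)) =
      fun ω => blockSum Z (Ico j (j + m)) ω ^ 2 - 2 * m * blockSum Z (Ico j (j + m)) ω := by
    simp only [hg, hW]
  have h1 : cov P (fun ω => g (ζ 1 ω)) (ζ 1) = 2 * m := by
    have h := covariance_blockSum_sq_sub hmeas hindep hdist (Ico 1 (1 + m))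
    rw [Nat.card_Ico, Nat.add_sub_cancel_left] at h
    rw [hgW, hW]
    exact h
  have hcov : ∀ j ∈ Icc 1 (2 * m),
      cov P (fun ω => g (ζ m ω)) (fun ω => g (ζ j ω)) = overlapCov (min j (2 * m - j)) := by
    intro j hj
    have hj := mem_Icc.mp hj
    change cov[_, _; P] = _
    rw [hgW, hgW]
    rcases le_total j m with hjm | hmj
    · rw [covariance_comm, covariance_window hmeas hindep hdist hjm (by omega),
        show min j (2 * m - j) = j + m - m by omega]
    · rw [covariance_window hmeas hindep hdist hmj (by omega),
        show min j (2 * m - j) = m + m - j by omega]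
  refine ⟨h1, ?_⟩
  rw [sum_congr rfl hcov, h1, sum_Icc_one_two_mul_min, sum_range_overlapCov_succ_add]
  ring

theorem greenwood_kernel_variance_constants
    {Ω : Type*} [MeasurableSpace Ω] (P : Measure Ω) [IsProbabilityMeasure P]
    (Z : ℕ → Ω → ℝ) (hmeas : ∀ i, Measurable (Z i))
    (hindep : iIndepFun Z P)
    (hdist : ∀ i, P.map (Z i) = expMeasure 1)
    (m : ℕ) (hm : 1 ≤ m)
    (ζ : ℕ → Ω → ℝ) (hζ : ∀ j ω, ζ j ω = ∑ i ∈ Finset.range m, Z (j + i) ω)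
    (g : ℝ → ℝ) (hg : ∀ x, g x = x ^ 2 - 2 * m * x) :
    cov P (fun ω => g (ζ 1 ω)) (ζ 1) = 2 * m ∧
      (∑ j ∈ Finset.Icc 1 (2 * m), cov P (fun ω => g (ζ m ω)) (fun ω => g (ζ j ω)))
          - (cov P (fun ω => g (ζ 1 ω)) (ζ 1)) ^ 2
        = 2 * m * (m + 1) * (2 * m + 1) / 3 :=
  greenwood_kernel_variance_constants_general P Z hmeas hindep hdist m ζ hζ g hg
end
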